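/- arXiv:2602.01456 — 5 statements merged into one kernel-verified Lean document; each statement's English description precedes it below -/
import Mathlib

section
/- Let p > 0, μ ∈ ℝ, σ > 0, and let f_{p,μ,σ} be the Generalized Gaussian density. Then for every x ∈ ℝ, the cumulative distribution function satisfies ∫_{−∞}^{x} f_{p,μ,σ}(t) dt = 1/2 + sgn(x−μ) · (1/(2Γ(1/p))) · γ(1/p, |x−μ|^p/(p σ^p)), where sgn is the sign function. -/
/-!
Substituting `u = (t - μ)^p / (p σ^p)` for `t > μ` turns `f_{p,μ,σ}(t) dt` into
`u^{1/p - 1} e^{-u} du / (2 Γ(1/p))`, so `∫_μ^x f = γ(1/p, (x - μ)^p / (p σ^p)) / (2 Γ(1/p))` for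
`x ≥ μ`. The density is symmetric about `μ`; this gives the case `x < μ`, and together with the
total mass `1` (a Gamma integral) it gives `∫_{-∞}^μ f = 1/2`.
-/

open MeasureTheory Real

/-- The Generalized Gaussian density with ℓ_p parameter `p`, location `μ` and scale `σ`. -/
noncomputable def ggPdf (p μ σ : ℝ) (x : ℝ) : ℝ :=
  p ^ (1 - 1 / p) / (2 * σ * Real.Gamma (1 / p)) * Real.exp (-(|x - μ| ^ p) / (p * σ ^ p))

/-- The lower incomplete gamma function `γ(s,t) = ∫₀^t u^{s−1} e^{−u} du`. -/
noncomputable def lowerIncGamma (s t : ℝ) : ℝ :=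
  ∫ u in Set.Ioc (0 : ℝ) t, u ^ (s - 1) * Real.exp (-u)

open Set

section

variable {p μ σ : ℝ}

theorem integral_ggPdf (hp : 0 < p) (hσ : 0 < σ) : ∫ t, ggPdf p μ σ t = 1 := by
  have hb : 0 < 1 / (p * σ ^ p) := by positivity
  have hΓ : 0 < Gamma (1 / p) := Gamma_pos_of_pos (by positivity)
  calc ∫ t, ggPdf p μ σ t
      = p ^ (1 - 1 / p) / (2 * σ * Gamma (1 / p)) *
          ∫ s, exp (-(1 / (p * σ ^ p)) * |s - μ| ^ p) := by
        rw [← integral_const_mul]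
        congr 1 with t
        rw [ggPdf, neg_div, neg_mul, one_div_mul_eq_div]
    _ = p ^ (1 - 1 / p) / (2 * σ * Gamma (1 / p)) *
          (2 * ((1 / (p * σ ^ p)) ^ (-1 / p) * Gamma (1 / p + 1))) := by
        rw [integral_sub_right_eq_self (fun s ↦ exp (-(1 / (p * σ ^ p)) * |s| ^ p)),
          integral_comp_abs (f := fun y ↦ exp (-(1 / (p * σ ^ p)) * y ^ p)),
          integral_exp_neg_mul_rpow hp hb]
    _ = 1 := by
        have hpσ : 0 < p * σ ^ p := by positivity
        rw [Gamma_add_one (by positivity), one_div (p * σ ^ p), inv_rpow hpσ.le,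
          ← rpow_neg hpσ.le, neg_div, neg_neg, mul_rpow hp.le (by positivity), ← rpow_mul hσ.le,
          mul_one_div_cancel hp.ne', rpow_one, rpow_sub hp, rpow_one]
        field_simp

theorem integrable_ggPdf (hp : 0 < p) (hσ : 0 < σ) : Integrable (ggPdf p μ σ) :=
  Integrable.of_integral_ne_zero (by rw [integral_ggPdf hp hσ]; exact one_ne_zero)

theorem ggPdf_two_mul_sub (t : ℝ) : ggPdf p μ σ (2 * μ - t) = ggPdf p μ σ t := by
  rw [ggPdf, ggPdf, show 2 * μ - t - μ = -(t - μ) by ring, abs_neg]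

theorem integral_Ioi_ggPdf_eq_integral_Iic :
    ∫ t in Ioi μ, ggPdf p μ σ t = ∫ t in Iic μ, ggPdf p μ σ t := by
  have hpre : (fun t ↦ 2 * μ - t) ⁻¹' Iic μ = Ici μ := by
    ext t
    simp only [mem_preimage, mem_Iic, mem_Ici]
    constructor <;> intro h <;> linarith
  have h := (Measure.measurePreserving_sub_left volume (2 * μ)).setIntegral_preimage_emb
    (MeasurableEquiv.subLeft (2 * μ)).measurableEmbedding (ggPdf p μ σ) (Iic μ)
  simp_rw [hpre, ggPdf_two_mul_sub] at h
  rwa [← integral_Ici_eq_integral_Ioi]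

theorem integral_Iic_ggPdf (hp : 0 < p) (hσ : 0 < σ) : ∫ t in Iic μ, ggPdf p μ σ t = 1 / 2 := by
  have hint : Integrable (ggPdf p μ σ) := integrable_ggPdf hp hσ
  have h := intervalIntegral.integral_Iic_add_Ioi (b := μ) hint.integrableOn hint.integrableOn
  rw [integral_Ioi_ggPdf_eq_integral_Iic, integral_ggPdf hp hσ] at h
  linarith

/-- With `g u = u ^ (1/p - 1) * exp (-u)` and `ψ t = (t - μ) ^ p / (p * σ ^ p)`, the right-hand
side is `(g ∘ ψ) t * ψ' t / (2 Γ(1/p))`. -/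
theorem ggPdf_eq_of_lt (hp : 0 < p) (hσ : 0 < σ) {t : ℝ} (ht : μ < t) :
    ggPdf p μ σ t = 1 / (2 * Gamma (1 / p)) *
      (((t - μ) ^ p / (p * σ ^ p)) ^ (1 / p - 1) * exp (-((t - μ) ^ p / (p * σ ^ p))) *
        ((t - μ) ^ (p - 1) / σ ^ p)) := by
  have hd : 0 < t - μ := sub_pos.2 ht
  have hΓ : 0 < Gamma (1 / p) := Gamma_pos_of_pos (by positivity)
  rw [ggPdf, abs_of_pos hd, neg_div, div_rpow (by positivity) (by positivity),
    mul_rpow hp.le (by positivity), ← rpow_mul hd.le, ← rpow_mul hσ.le,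
    mul_sub, mul_one_div_cancel hp.ne', mul_one, rpow_sub hd, rpow_sub hd, rpow_sub hσ,
    rpow_sub hp, rpow_sub hp, rpow_one, rpow_one, rpow_one]
  field_simp

theorem intervalIntegral_ggPdf_of_le (hp : 0 < p) (hσ : 0 < σ) {x : ℝ} (hx : μ ≤ x) :
    ∫ t in μ..x, ggPdf p μ σ t =
      1 / (2 * Gamma (1 / p)) * lowerIncGamma (1 / p) ((x - μ) ^ p / (p * σ ^ p)) := by
  have hcont : ContinuousOn (fun t ↦ (t - μ) ^ p / (p * σ ^ p)) (uIcc μ x) :=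
    ((continuous_sub_right μ).rpow_const (fun _ ↦ Or.inr hp.le)).div_const _ |>.continuousOn
  have hderiv {t : ℝ} (ht : μ < t) :
      HasDerivAt (fun t ↦ (t - μ) ^ p / (p * σ ^ p)) ((t - μ) ^ (p - 1) / σ ^ p) t :=
    ((((hasDerivAt_id' t).sub_const μ).rpow_const (Or.inl (sub_pos.2 ht).ne')).div_const
      (p * σ ^ p)).congr_deriv (by field_simp)
  have hsubst := intervalIntegral.integral_comp_mul_deriv_of_deriv_nonneg
    (g := fun u ↦ u ^ (1 / p - 1) * exp (-u)) hcont
    (fun t ht ↦ hderiv (min_eq_left hx ▸ ht.1))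
    (fun t ht ↦ by have := sub_pos.2 (min_eq_left hx ▸ ht.1); positivity)
  rw [sub_self, zero_rpow hp.ne', zero_div] at hsubst
  rw [lowerIncGamma, ← intervalIntegral.integral_of_le (by positivity), ← hsubst,
    ← intervalIntegral.integral_const_mul]
  refine intervalIntegral.integral_congr_ae (Filter.Eventually.of_forall fun t ht ↦ ?_)
  rw [uIoc_of_le hx] at ht
  exact ggPdf_eq_of_lt hp hσ ht.1

theorem intervalIntegral_ggPdf (hp : 0 < p) (hσ : 0 < σ) (x : ℝ) :
    ∫ t in μ..x, ggPdf p μ σ t = sign (x - μ) * (1 / (2 * Gamma (1 / p))) *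
      lowerIncGamma (1 / p) (|x - μ| ^ p / (p * σ ^ p)) := by
  rcases lt_trichotomy x μ with hx | rfl | hx
  · have hreflect : ∫ t in μ..x, ggPdf p μ σ t = -∫ t in μ..2 * μ - x, ggPdf p μ σ t :=
      calc ∫ t in μ..x, ggPdf p μ σ t = ∫ t in μ..x, ggPdf p μ σ (2 * μ - t) := by
            simp_rw [ggPdf_two_mul_sub]
        _ = ∫ t in 2 * μ - x..2 * μ - μ, ggPdf p μ σ t :=
            intervalIntegral.integral_comp_sub_left _ _
        _ = -∫ t in μ..2 * μ - x, ggPdf p μ σ t := by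
            rw [intervalIntegral.integral_symm, two_mul, add_sub_cancel_right]
    rw [hreflect, intervalIntegral_ggPdf_of_le hp hσ (by linarith), sign_of_neg (sub_neg.2 hx),
      abs_of_neg (sub_neg.2 hx), show 2 * μ - x - μ = -(x - μ) by ring]
    ring
  · simp [lowerIncGamma]
  · rw [intervalIntegral_ggPdf_of_le hp hσ hx.le, sign_of_pos (sub_pos.2 hx),
      abs_of_pos (sub_pos.2 hx)]
    ring

end

/-- The CDF of the Generalized Gaussian distribution:
`∫_{−∞}^{x} f_{p,μ,σ}(t) dt = 1/2 + sgn(x−μ) · (1/(2Γ(1/p))) · γ(1/p, |x−μ|^p/(p σ^p))`. -/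
theorem genGaussian_cdf (p μ σ : ℝ) (hp : 0 < p) (hσ : 0 < σ) (x : ℝ) :
    ∫ t in Set.Iic x, ggPdf p μ σ t =
      1 / 2 + Real.sign (x - μ) * (1 / (2 * Real.Gamma (1 / p))) *
        lowerIncGamma (1 / p) (|x - μ| ^ p / (p * σ ^ p)) := by
  have hint : Integrable (ggPdf p μ σ) := integrable_ggPdf hp hσ
  rw [← intervalIntegral_ggPdf hp hσ, ← integral_Iic_ggPdf hp hσ,
    ← intervalIntegral.integral_Iic_sub_Iic hint.integrableOn hint.integrableOn, add_sub_cancel]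
end

section
/- Let p > 0, μ ∈ ℝ, σ > 0, and let f_{p,μ,σ} be the Generalized Gaussian density. Then the variance of this distribution satisfies ∫_ℝ (x−μ)² f_{p,μ,σ}(x) dx = σ² · p^{2/p} · Γ(3/p)/Γ(1/p). -/
/-! After centring at `μ`, the density is a constant multiple of `exp (-b |x| ^ p)` with
`b = (p σ ^ p)⁻¹`, and the absolute moment `∫ |x| ^ q exp (-b |x| ^ p)` is twice the
half-line integral, which the substitution `t = b x ^ p` turns into
`2 b ^ (-(q + 1) / p) Γ((q + 1) / p) / p`.
For `q = 2` the powers of `p` and `σ` combine to `σ ^ 2 p ^ (2 / p)`. -/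

open MeasureTheory Real

theorem integral_abs_rpow_mul_exp_neg_mul_abs_rpow {p q b : ℝ} (hp : 0 < p) (hq : -1 < q)
    (hb : 0 < b) :
    ∫ x : ℝ, |x| ^ q * exp (-b * |x| ^ p) =
      2 / p * b ^ (-(q + 1) / p) * Gamma ((q + 1) / p) := by
  rw [integral_comp_abs (f := fun x => x ^ q * exp (-b * x ^ p)),
    integral_rpow_mul_exp_neg_mul_rpow hp hq hb]
  ring

theorem ggPdf_eq_mul_exp_neg_mul_abs_rpow (p μ σ x : ℝ) :
    ggPdf p μ σ x =
      p ^ (1 - 1 / p) / (2 * σ * Gamma (1 / p)) * exp (-(p * σ ^ p)⁻¹ * |x - μ| ^ p) := by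
  rw [ggPdf, neg_div, neg_mul, inv_mul_eq_div]

theorem inv_mul_rpow_rpow_neg_div {a σ r : ℝ} (ha : 0 < a) (hσ : 0 < σ) (hr : r ≠ 0)
    (q : ℝ) :
    (a * σ ^ r)⁻¹ ^ (-(q / r)) = a ^ (q / r) * σ ^ q := by
  rw [rpow_neg (by positivity), inv_rpow (by positivity), inv_inv,
    mul_rpow ha.le (by positivity), ← rpow_mul hσ.le, mul_div_cancel₀ q hr]

/-- The variance of the Generalized Gaussian distribution:
`∫_ℝ (x−μ)² f_{p,μ,σ}(x) dx = σ² · p^{2/p} · Γ(3/p)/Γ(1/p)`. -/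
theorem genGaussian_variance (p μ σ : ℝ) (hp : 0 < p) (hσ : 0 < σ) :
    ∫ x : ℝ, (x - μ) ^ 2 * ggPdf p μ σ x =
      σ ^ 2 * p ^ (2 / p) * (Real.Gamma (3 / p) / Real.Gamma (1 / p)) := by
  set C := p ^ (1 - 1 / p) / (2 * σ * Gamma (1 / p)) with hC
  set b := (p * σ ^ p)⁻¹ with hb_def
  have hb : 0 < b := by positivity
  have hpow : p ^ (1 - 1 / p) * p ^ (3 / p) = p * p ^ (2 / p) := by
    rw [← rpow_add hp, ← rpow_one_add' hp.le (by positivity)]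
    ring_nf
  calc ∫ x : ℝ, (x - μ) ^ 2 * ggPdf p μ σ x
      = ∫ x : ℝ, C * (|x - μ| ^ (2 : ℝ) * exp (-b * |x - μ| ^ p)) := by
        congr 1 with x
        rw [ggPdf_eq_mul_exp_neg_mul_abs_rpow, rpow_two, sq_abs]
        ring
    _ = C * (2 / p * b ^ (-(3 / p)) * Gamma (3 / p)) := by
        rw [integral_const_mul,
          integral_sub_right_eq_self (fun x => |x| ^ (2 : ℝ) * exp (-b * |x| ^ p)),
          integral_abs_rpow_mul_exp_neg_mul_abs_rpow hp (by norm_num) hb]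
        norm_num [neg_div]
    _ = C * (2 / p * (p ^ (3 / p) * σ ^ 3) * Gamma (3 / p)) := by
        rw [hb_def, inv_mul_rpow_rpow_neg_div hp hσ hp.ne', rpow_ofNat]
    _ = p ^ (1 - 1 / p) * p ^ (3 / p) * σ ^ 3 * Gamma (3 / p) / (p * σ * Gamma (1 / p)) := by
        rw [hC]
        field_simp
    _ = σ ^ 2 * p ^ (2 / p) * (Gamma (3 / p) / Gamma (1 / p)) := by
        rw [hpow]
        field_simp
end

section
/- Let p > 0, μ ∈ ℝ, σ > 0, and let Z₁, …, Z_d be i.i.d. real random variables with the Generalized Gaussian density f_{p,μ,σ}. Set X_i := max(0, Z_i). Then the expected ℓ₀ pseudo-norm of X = (X₁,…,X_d), i.e., the expected number of nonzero coordinates, equals d · Φ_{p}(μ/σ) = (d/2) · (1 + sgn(μ/σ) · P(1/p, |μ/σ|^p / p)), where Φ_p is the CDF of the standard Generalized Gaussian f_{p,0,1}, sgn is the sign function, and P(s,t) = γ(s,t)/Γ(s) is the lower regularized gamma function. -/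
open MeasureTheory ProbabilityTheory Real

/-- The CDF of the standard Generalized Gaussian distribution `f_{p,0,1}`. -/
noncomputable def ggCdf (p : ℝ) (x : ℝ) : ℝ := ∫ t in Set.Iic x, ggPdf p 0 1 t

/-- The lower regularized gamma function `P(s,t) = γ(s,t)/Γ(s)`. -/
noncomputable def regIncGamma (s t : ℝ) : ℝ := lowerIncGamma s t / Real.Gamma s
/-!
The count is a sum of indicators of the events `{Z i > 0}`, so its expectation is `d · P(Z > 0)`.
The substitution `x = σ y + μ` and the evenness of the standard density turn `P(Z > 0)` into
`Φ_p(μ/σ)`. On `(0, ∞)` the substitution `u = x ^ p / p` turns the standard density into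
`u ^ (1/p - 1) e^(-u) / (2 Γ(1/p))`, so the standard mass of `(0, t]` is `P(1/p, t^p/p) / 2` and
that of `(0, ∞)` is `1/2`; splitting `Φ_p(t)` at `0` gives its closed form.
-/

open Set

section StandardDensity

variable {p : ℝ}

lemma ggPdf_zero_one_neg (p x : ℝ) : ggPdf p 0 1 (-x) = ggPdf p 0 1 x := by
  simp only [ggPdf, sub_zero, abs_neg]

lemma ggPdf_zero_one_of_pos {x : ℝ} (hx : 0 < x) :
    ggPdf p 0 1 x = p ^ (1 - 1 / p) / (2 * Gamma (1 / p)) * exp (-(x ^ p / p)) := by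
  simp only [ggPdf, sub_zero, abs_of_pos hx, one_rpow, mul_one, neg_div]

lemma setIntegral_image_rpow_div (hp : 0 < p) {s : Set ℝ} (hs : MeasurableSet s)
    (hs0 : s ⊆ Ioi 0) :
    ∫ u in (fun x => x ^ p / p) '' s, u ^ (1 / p - 1) * exp (-u)
      = p ^ (1 - 1 / p) * ∫ x in s, exp (-(x ^ p / p)) := by
  have hderiv : ∀ x ∈ s, HasDerivWithinAt (fun x => x ^ p / p) (p * x ^ (p - 1) / p) s x :=
    fun x hx => ((hasDerivAt_rpow_const (Or.inl (hs0 hx).ne')).div_const p).hasDerivWithinAt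
  have hinj : InjOn (fun x : ℝ => x ^ p / p) s := fun x hx y hy hxy =>
    rpow_left_injOn hp.ne' (mem_Ioi.mp (hs0 hx)).le (mem_Ioi.mp (hs0 hy)).le
      ((div_left_inj' hp.ne').mp hxy)
  rw [integral_image_eq_integral_abs_deriv_smul hs hderiv hinj, ← integral_const_mul]
  refine setIntegral_congr_fun hs fun x hx => ?_
  have hx0 : 0 < x := hs0 hx
  have hpow : x ^ (p - 1) * (x ^ p) ^ (1 / p - 1) = 1 := by
    rw [← rpow_mul hx0.le, ← rpow_add hx0]
    convert rpow_zero x using 2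
    field_simp
    ring
  rw [smul_eq_mul, mul_div_cancel_left₀ _ hp.ne', abs_of_pos (rpow_pos_of_pos hx0 _),
    div_rpow (rpow_nonneg hx0.le p) hp.le, ← mul_assoc, mul_div_assoc', hpow, one_div (p ^ _),
    ← rpow_neg hp.le, neg_sub]

lemma setIntegral_ggPdf_zero_one (hp : 0 < p) {s : Set ℝ} (hs : MeasurableSet s)
    (hs0 : s ⊆ Ioi 0) :
    ∫ x in s, ggPdf p 0 1 x
      = (2 * Gamma (1 / p))⁻¹ * ∫ u in (fun x => x ^ p / p) '' s, u ^ (1 / p - 1) * exp (-u) := by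
  rw [setIntegral_image_rpow_div hp hs hs0,
    setIntegral_congr_fun hs fun x hx => ggPdf_zero_one_of_pos (hs0 hx), integral_const_mul]
  ring

lemma strictMonoOn_rpow_div (hp : 0 < p) : StrictMonoOn (fun x : ℝ => x ^ p / p) (Ici 0) :=
  fun _ hx _ hy hxy =>
    div_lt_div_of_pos_right (strictMonoOn_rpow_Ici_of_exponent_pos hp hx hy hxy) hp

lemma continuous_rpow_div (hp : 0 < p) : Continuous (fun x : ℝ => x ^ p / p) :=
  (continuous_rpow_const hp.le).div_const p

lemma image_rpow_div_Ioi (hp : 0 < p) : (fun x : ℝ => x ^ p / p) '' Ioi 0 = Ioi 0 := by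
  rw [(continuous_rpow_div hp).continuousOn.image_Ioi_of_strictMonoOn (strictMonoOn_rpow_div hp)
    ((tendsto_rpow_atTop hp).atTop_div_const hp), zero_rpow hp.ne', zero_div]

lemma image_rpow_div_Ioc (hp : 0 < p) {t : ℝ} (ht : 0 ≤ t) :
    (fun x : ℝ => x ^ p / p) '' Ioc 0 t = Ioc 0 (t ^ p / p) := by
  rw [(continuous_rpow_div hp).continuousOn.image_Ioc_of_strictMonoOn ht
    ((strictMonoOn_rpow_div hp).mono Icc_subset_Ici_self), zero_rpow hp.ne', zero_div]

lemma integral_Ioi_zero_ggPdf_zero_one (hp : 0 < p) : ∫ x in Ioi 0, ggPdf p 0 1 x = 1 / 2 := by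
  have hΓ : Gamma (1 / p) ≠ 0 := (Gamma_pos_of_pos (one_div_pos.mpr hp)).ne'
  rw [setIntegral_ggPdf_zero_one hp measurableSet_Ioi subset_rfl, image_rpow_div_Ioi hp]
  simp_rw [mul_comm _ (exp _)]
  rw [← Gamma_eq_integral (one_div_pos.mpr hp)]
  field_simp

lemma integral_Ioc_zero_ggPdf_zero_one (hp : 0 < p) {t : ℝ} (ht : 0 ≤ t) :
    ∫ x in Ioc 0 t, ggPdf p 0 1 x = 1 / 2 * regIncGamma (1 / p) (t ^ p / p) := by
  rw [setIntegral_ggPdf_zero_one hp measurableSet_Ioc Ioc_subset_Ioi_self,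
    image_rpow_div_Ioc hp ht, regIncGamma, lowerIncGamma]
  ring

lemma ggCdf_eq_integral_Ioi_neg (p t : ℝ) : ggCdf p t = ∫ x in Ioi (-t), ggPdf p 0 1 x := by
  rw [ggCdf, ← integral_comp_neg_Iic]
  simp_rw [ggPdf_zero_one_neg]

lemma ggCdf_zero (hp : 0 < p) : ggCdf p 0 = 1 / 2 := by
  rw [ggCdf_eq_integral_Ioi_neg, neg_zero, integral_Ioi_zero_ggPdf_zero_one hp]

lemma ggCdf_eq_regIncGamma (hp : 0 < p) (t : ℝ) :
    ggCdf p t = 1 / 2 * (1 + sign t * regIncGamma (1 / p) (|t| ^ p / p)) := by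
  have hIoi : IntegrableOn (ggPdf p 0 1) (Ioi 0) := Integrable.of_integral_ne_zero (by
    rw [integral_Ioi_zero_ggPdf_zero_one hp]; norm_num)
  rcases lt_trichotomy t 0 with ht | rfl | ht
  · have ht' : 0 ≤ -t := neg_nonneg.mpr ht.le
    have hsplit := setIntegral_union (Ioc_disjoint_Ioi le_rfl) measurableSet_Ioi
      (hIoi.mono_set Ioc_subset_Ioi_self) (hIoi.mono_set (Ioi_subset_Ioi ht'))
    rw [Ioc_union_Ioi_eq_Ioi ht', integral_Ioi_zero_ggPdf_zero_one hp,
      integral_Ioc_zero_ggPdf_zero_one hp ht', ← ggCdf_eq_integral_Ioi_neg] at hsplit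
    rw [sign_of_neg ht, abs_of_neg ht]
    linarith
  · rw [ggCdf_zero hp, sign_zero]
    ring
  · have hIic : IntegrableOn (ggPdf p 0 1) (Iic 0) := Integrable.of_integral_ne_zero (by
      rw [← ggCdf, ggCdf_zero hp]; norm_num)
    rw [ggCdf, ← Iic_union_Ioc_eq_Iic ht.le, setIntegral_union (Iic_disjoint_Ioc le_rfl)
      measurableSet_Ioc hIic (hIoi.mono_set Ioc_subset_Ioi_self), ← ggCdf, ggCdf_zero hp,
      integral_Ioc_zero_ggPdf_zero_one hp ht.le, sign_of_pos ht, abs_of_pos ht]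
    ring

end StandardDensity

lemma ggPdf_eq_inv_mul_ggPdf_zero_one (p μ : ℝ) {σ : ℝ} (hσ : 0 < σ) (x : ℝ) :
    ggPdf p μ σ x = σ⁻¹ * ggPdf p 0 1 ((x - μ) / σ) := by
  simp only [ggPdf, sub_zero, abs_div, abs_of_pos hσ, div_rpow (abs_nonneg _) hσ.le, one_rpow]
  field_simp

lemma integral_Ioi_ggPdf (p μ : ℝ) {σ : ℝ} (hσ : 0 < σ) (a : ℝ) :
    ∫ x in Ioi a, ggPdf p μ σ x = ∫ y in Ioi ((a - μ) / σ), ggPdf p 0 1 y := by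
  have himage : (fun y => σ * y + μ) '' Ioi ((a - μ) / σ) = Ioi a := by
    ext x
    refine ⟨?_, fun hx => ⟨(x - μ) / σ, ?_, ?_⟩⟩
    · rintro ⟨y, hy, rfl⟩
      have := (div_lt_iff₀' hσ).mp (mem_Ioi.mp hy)
      simp only [mem_Ioi]
      linarith
    · exact div_lt_div_of_pos_right (sub_lt_sub_right (mem_Ioi.mp hx) μ) hσ
    · field_simp; ring
  rw [← himage, integral_image_eq_integral_abs_deriv_smul measurableSet_Ioi
    (fun y _ => (((hasDerivAt_id' y).const_mul σ).add_const μ).hasDerivWithinAt)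
    fun y₁ _ y₂ _ h => mul_left_cancel₀ hσ.ne' (add_right_cancel h)]
  refine setIntegral_congr_fun measurableSet_Ioi fun y _ => ?_
  rw [mul_one, abs_of_pos hσ, smul_eq_mul, ggPdf_eq_inv_mul_ggPdf_zero_one p μ hσ,
    add_sub_cancel_right, mul_div_cancel_left₀ _ hσ.ne', mul_inv_cancel_left₀ hσ.ne']

lemma integral_Ioi_zero_ggPdf (p μ : ℝ) {σ : ℝ} (hσ : 0 < σ) :
    ∫ x in Ioi 0, ggPdf p μ σ x = ggCdf p (μ / σ) := by
  rw [integral_Ioi_ggPdf p μ hσ, ggCdf_eq_integral_Ioi_neg, zero_sub, neg_div]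

lemma ggPdf_nonneg {p : ℝ} (hp : 0 < p) (μ : ℝ) {σ : ℝ} (hσ : 0 ≤ σ) : 0 ≤ ggPdf p μ σ := by
  have := Gamma_pos_of_pos (one_div_pos.mpr hp)
  intro x
  unfold ggPdf
  positivity

lemma measurable_ggPdf (p μ σ : ℝ) : Measurable (ggPdf p μ σ) := by
  unfold ggPdf
  fun_prop

lemma ite_max_zero_ne_zero_eq_indicator {Ω : Type*} (X : Ω → ℝ) (ω : Ω) :
    (if max 0 (X ω) ≠ 0 then (1 : ℝ) else 0) = (X ⁻¹' Ioi 0).indicator 1 ω := by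
  simp [indicator]

lemma measureReal_preimage_eq_setIntegral {Ω : Type*} [MeasurableSpace Ω] {P : Measure Ω}
    {X : Ω → ℝ} (hX : Measurable X) {f : ℝ → ℝ} (hf : 0 ≤ f) (hfm : Measurable f)
    (hlaw : P.map X = volume.withDensity (fun x => ENNReal.ofReal (f x)))
    {s : Set ℝ} (hs : MeasurableSet s) :
    P.real (X ⁻¹' s) = ∫ x in s, f x := by
  rw [← map_measureReal_apply hX hs, hlaw, measureReal_def, withDensity_apply _ hs,
    integral_eq_lintegral_of_nonneg_ae (.of_forall hf) hfm.aestronglyMeasurable]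

theorem expected_l0_rectified_genGaussian_general
    (d : ℕ) (p μ σ : ℝ) (hp : 0 < p) (hσ : 0 < σ)
    {Ω : Type*} [MeasureSpace Ω] [IsProbabilityMeasure (ℙ : Measure Ω)]
    (Z : Fin d → Ω → ℝ) (hmeas : ∀ i, Measurable (Z i))
    (hlaw : ∀ i, Measure.map (Z i) ℙ =
      volume.withDensity (fun x => ENNReal.ofReal (ggPdf p μ σ x))) :
    (∫ ω, ∑ i, (if max 0 (Z i ω) ≠ 0 then (1 : ℝ) else 0) ∂ℙ) = d * ggCdf p (μ / σ) ∧
    (∫ ω, ∑ i, (if max 0 (Z i ω) ≠ 0 then (1 : ℝ) else 0) ∂ℙ) =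
      (d : ℝ) / 2 * (1 + Real.sign (μ / σ) * regIncGamma (1 / p) (|μ / σ| ^ p / p)) := by
  have hcount : (∫ ω, ∑ i, (if max 0 (Z i ω) ≠ 0 then (1 : ℝ) else 0) ∂ℙ)
      = d * ggCdf p (μ / σ) := by
    have hprob : ∀ i, (ℙ : Measure Ω).real (Z i ⁻¹' Ioi 0) = ggCdf p (μ / σ) := fun i => by
      rw [measureReal_preimage_eq_setIntegral (hmeas i) (ggPdf_nonneg hp μ hσ.le)
        (measurable_ggPdf p μ σ) (hlaw i) measurableSet_Ioi, integral_Ioi_zero_ggPdf p μ hσ]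
    simp_rw [ite_max_zero_ne_zero_eq_indicator]
    rw [integral_finsetSum _ fun i _ => (integrable_const 1).indicator (hmeas i measurableSet_Ioi)]
    simp_rw [integral_indicator_one (hmeas _ measurableSet_Ioi), hprob]
    rw [Finset.sum_const, Finset.card_univ, Fintype.card_fin, nsmul_eq_mul]
  refine ⟨hcount, ?_⟩
  rw [hcount, ggCdf_eq_regIncGamma hp]
  ring

/-- **Sparsity of the Rectified Generalized Gaussian.**
If `Z₁,…,Z_d` are i.i.d. with Generalized Gaussian density `f_{p,μ,σ}` and `X_i = max(0,Z_i)`,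
then the expected number of nonzero coordinates of `X` equals
`d · Φ_p(μ/σ) = (d/2)(1 + sgn(μ/σ) P(1/p, |μ/σ|^p/p))`. -/
theorem expected_l0_rectified_genGaussian
    (d : ℕ) (p μ σ : ℝ) (hp : 0 < p) (hσ : 0 < σ)
    {Ω : Type*} [MeasureSpace Ω] [IsProbabilityMeasure (ℙ : Measure Ω)]
    (Z : Fin d → Ω → ℝ) (hmeas : ∀ i, Measurable (Z i))
    (hindep : iIndepFun Z ℙ)
    (hlaw : ∀ i, Measure.map (Z i) ℙ =
      volume.withDensity (fun x => ENNReal.ofReal (ggPdf p μ σ x))) :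
    (∫ ω, ∑ i, (if max 0 (Z i ω) ≠ 0 then (1 : ℝ) else 0) ∂ℙ) = d * ggCdf p (μ / σ) ∧
    (∫ ω, ∑ i, (if max 0 (Z i ω) ≠ 0 then (1 : ℝ) else 0) ∂ℙ) =
      (d : ℝ) / 2 * (1 + Real.sign (μ / σ) * regIncGamma (1 / p) (|μ / σ| ^ p / p)) :=
  expected_l0_rectified_genGaussian_general d p μ σ hp hσ Z hmeas hlaw
end

section
/- Let X be a real random variable whose law ℙ_X is absolutely continuous with respect to Lebesgue measure λ, set Z := max(0, X), write d := ℙ_X((0,∞)) with 0 < d < 1, let ℙ_{X | (0,∞)} be the law of X conditioned on (0,∞) with density h := dℙ_{X|(0,∞)}/dλ, and let ν := δ₀ + λ. Assume the differential entropy H₁ := −∫_{(0,∞)} h log h dλ is well-defined and finite. Then the entropy of Z with respect to ν satisfies −∫ (dℙ_Z/dν) log(dℙ_Z/dν) dν = d · H₁ + d log(1/d) + (1 − d) log(1/(1 − d)). In particular, the ν-entropy of the rectified variable Z decomposes as the information dimension d times the differential entropy of the continuous part plus the binary Shannon entropy of the event {Z > 0}. -/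
/-!
The law of `max 0 X` is the atom `ℙ_X((-∞, 0]) • δ₀` plus the restriction `ρ` of `ℙ_X` to
`(0, ∞)`. Since `λ` has no atoms, its density against `δ₀ + λ` is the density of `ρ` against `λ`
redefined to be `1 - d` at `0`, so the entropy splits as `negMulLog (1 - d)` plus the
differential entropy of `ρ = d • ℙ_{X|(0,∞)}`. The identity
`negMulLog (d * y) = d * negMulLog y + negMulLog d * y` together with `∫ h = 1` turns the latter
into `d * H₁ + negMulLog d`.
-/

open MeasureTheory ProbabilityTheory Real
open scoped ENNReal

theorem map_max_zero_eq (μ : Measure ℝ) :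
    μ.map (max 0) = μ (Set.Iic 0) • Measure.dirac 0 + μ.restrict (Set.Ioi 0) := by
  have hmax : Measurable (max (0 : ℝ)) := by fun_prop
  conv_lhs => rw [← Measure.restrict_add_restrict_compl (μ := μ) (measurableSet_Iic (a := 0))]
  rw [Measure.map_add _ _ hmax, Set.compl_Iic]
  congr 1
  · rw [Measure.map_congr (g := fun _ => (0 : ℝ)) ?_, Measure.map_const,
      Measure.restrict_apply_univ]
    filter_upwards [ae_restrict_mem measurableSet_Iic] with x hx using max_eq_left hx
  · rw [Measure.map_congr (g := id) ?_, Measure.map_id]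
    filter_upwards [ae_restrict_mem measurableSet_Ioi] with x hx using max_eq_right hx.le

section Atom

variable {α : Type*} [MeasurableSpace α] (x₀ : α) {μ : Measure α}

theorem integral_dirac_add [MeasurableSingletonClass α] {E : Type*} [NormedAddCommGroup E]
    [NormedSpace ℝ E] [CompleteSpace E] {f : α → E} (hf : Integrable f μ) :
    ∫ x, f x ∂(Measure.dirac x₀ + μ) = f x₀ + ∫ x, f x ∂μ := by
  rw [integral_add_measure (integrable_dirac enorm_lt_top) hf, integral_dirac]

variable [DecidableEq α]

theorem update_ae_eq [NullSingletonClass μ] (f : α → ℝ≥0∞) (a : ℝ≥0∞) :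
    Function.update f x₀ a =ᵐ[μ] f := by
  filter_upwards [μ.ae_ne x₀] with x hx using Function.update_of_ne hx _ _

variable [MeasurableSingletonClass α]

theorem Measurable.update_const {f : α → ℝ≥0∞} (hf : Measurable f) (a : ℝ≥0∞) :
    Measurable (Function.update f x₀ a) :=
  Set.piecewise_singleton x₀ (fun _ => a) f ▸
    Measurable.piecewise (measurableSet_singleton x₀) measurable_const hf

variable [NullSingletonClass μ] {ρ : Measure α} [ρ.HaveLebesgueDecomposition μ]

theorem withDensity_update_rnDeriv (hρ : ρ ≪ μ) (a : ℝ≥0∞) :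
    (Measure.dirac x₀ + μ).withDensity (Function.update (ρ.rnDeriv μ) x₀ a) =
      a • Measure.dirac x₀ + ρ := by
  rw [withDensity_add_measure, dirac_withDensity, Function.update_self,
    withDensity_congr_ae (update_ae_eq x₀ _ a), Measure.withDensity_rnDeriv_eq _ _ hρ]

theorem rnDeriv_smul_dirac_add [SigmaFinite μ] (hρ : ρ ≪ μ) (a : ℝ≥0∞) :
    (a • Measure.dirac x₀ + ρ).rnDeriv (Measure.dirac x₀ + μ)
      =ᵐ[Measure.dirac x₀ + μ] Function.update (ρ.rnDeriv μ) x₀ a := by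
  rw [← withDensity_update_rnDeriv x₀ hρ a]
  exact Measure.rnDeriv_withDensity _ ((Measure.measurable_rnDeriv ρ μ).update_const x₀ a)

theorem neg_integral_mul_log_rnDeriv_smul_dirac_add [SigmaFinite μ] (hρ : ρ ≪ μ) (a : ℝ≥0∞)
    (hint : Integrable (fun x => negMulLog (ρ.rnDeriv μ x).toReal) μ) :
    -∫ x, ((a • Measure.dirac x₀ + ρ).rnDeriv (Measure.dirac x₀ + μ) x).toReal *
        log ((a • Measure.dirac x₀ + ρ).rnDeriv (Measure.dirac x₀ + μ) x).toReal
          ∂(Measure.dirac x₀ + μ) =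
      negMulLog a.toReal + ∫ x, negMulLog (ρ.rnDeriv μ x).toReal ∂μ := by
  have hupdate : (fun x => negMulLog (Function.update (ρ.rnDeriv μ) x₀ a x).toReal)
      =ᵐ[μ] fun x => negMulLog (ρ.rnDeriv μ x).toReal :=
    (update_ae_eq x₀ (ρ.rnDeriv μ) a).mono fun x hx => by simp only [hx]
  rw [← integral_neg]
  calc ∫ x, -(((a • Measure.dirac x₀ + ρ).rnDeriv (Measure.dirac x₀ + μ) x).toReal *
          log ((a • Measure.dirac x₀ + ρ).rnDeriv (Measure.dirac x₀ + μ) x).toReal)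
          ∂(Measure.dirac x₀ + μ)
      = ∫ x, negMulLog (Function.update (ρ.rnDeriv μ) x₀ a x).toReal ∂(Measure.dirac x₀ + μ) :=
        integral_congr_ae <| (rnDeriv_smul_dirac_add x₀ hρ a).mono fun x hx => by
          simp only [hx, negMulLog, neg_mul]
    _ = negMulLog a.toReal + ∫ x, negMulLog (ρ.rnDeriv μ x).toReal ∂μ := by
        rw [integral_dirac_add x₀ (hint.congr hupdate.symm), Function.update_self,
          integral_congr_ae hupdate]

end Atom

theorem Real.negMulLog_const_mul (c y : ℝ) :
    negMulLog (c * y) = c * negMulLog y + negMulLog c * y := by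
  rw [negMulLog_mul]; ring

section NegMulLog

variable {α : Type*} [MeasurableSpace α] {μ : Measure α} {f : α → ℝ}

theorem MeasureTheory.Integrable.negMulLog_const_mul (hf : Integrable f μ)
    (hfl : Integrable (fun x => negMulLog (f x)) μ) (c : ℝ) :
    Integrable (fun x => negMulLog (c * f x)) μ := by
  simp only [Real.negMulLog_const_mul]
  exact (hfl.const_mul c).add (hf.const_mul _)

theorem integral_negMulLog_const_mul (hf : Integrable f μ)
    (hfl : Integrable (fun x => negMulLog (f x)) μ) (c : ℝ) :
    ∫ x, negMulLog (c * f x) ∂μ = c * ∫ x, negMulLog (f x) ∂μ + negMulLog c * ∫ x, f x ∂μ := by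
  simp only [negMulLog_const_mul]
  rw [integral_add (hfl.const_mul c) (hf.const_mul _), integral_const_mul, integral_const_mul]

end NegMulLog

section Cond

variable {α : Type*} [MeasurableSpace α] {μ : Measure α}

theorem smul_cond_eq_restrict (P : Measure α) [IsFiniteMeasure P] (S : Set α) :
    P S • P[|S] = P.restrict S := by
  by_cases hPS : P S = 0
  · simp [hPS, Measure.restrict_eq_zero.2 hPS]
  · rw [ProbabilityTheory.cond, smul_smul, ENNReal.mul_inv_cancel hPS (measure_ne_top P S),
      one_smul]

variable [SigmaFinite μ]

theorem rnDeriv_restrict_ae_eq_smul_rnDeriv_cond (P : Measure α) [IsFiniteMeasure P] (S : Set α) :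
    (P.restrict S).rnDeriv μ =ᵐ[μ] P S • (P[|S]).rnDeriv μ := by
  rw [← smul_cond_eq_restrict]
  exact Measure.rnDeriv_smul_left_of_ne_top _ _ (measure_ne_top P S)

theorem rnDeriv_eq_zero_ae_of_ae_mem {ν : Measure α} {S : Set α} [ν.HaveLebesgueDecomposition μ]
    (hS : MeasurableSet S) (hνS : ∀ᵐ x ∂ν, x ∈ S) :
    ∀ᵐ x ∂μ, x ∉ S → ν.rnDeriv μ x = 0 := by
  rw [← Measure.restrict_eq_self_of_ae_mem hνS]
  filter_upwards [Measure.rnDeriv_restrict ν μ hS] with x hx hxS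
  rw [hx, Set.indicator_of_notMem hxS]

theorem integrable_and_integral_negMulLog_rnDeriv_restrict {P : Measure α} [IsFiniteMeasure P]
    (hP : P ≪ μ) {S : Set α} (hS : MeasurableSet S) (hPS : P S ≠ 0) {h : α → ℝ}
    (hh : ∀ᵐ x ∂μ, h x = (P[|S].rnDeriv μ x).toReal)
    (hint : IntegrableOn (fun x => h x * log (h x)) S μ) :
    Integrable (fun x => negMulLog ((P.restrict S).rnDeriv μ x).toReal) μ ∧
      ∫ x, negMulLog ((P.restrict S).rnDeriv μ x).toReal ∂μ =
        (P S).toReal * -(∫ x in S, h x * log (h x) ∂μ) + negMulLog (P S).toReal := by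
  have := cond_isProbabilityMeasure (s := S) hPS
  have hvanish : ∀ᵐ x ∂μ, x ∉ S → h x * log (h x) = 0 := by
    filter_upwards [hh, rnDeriv_eq_zero_ae_of_ae_mem (ν := P[|S]) hS (ae_cond_mem hS)]
      with x hx hx0 hxS
    simp [hx, hx0 hxS]
  have hh_int : Integrable h μ :=
    Measure.integrable_toReal_rnDeriv.congr (hh.mono fun _ => Eq.symm)
  have hmass : ∫ x, h x ∂μ = 1 := by
    rw [integral_congr_ae hh, Measure.integral_toReal_rnDeriv (cond_absolutelyContinuous.trans hP),
      probReal_univ]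
  have hhl : Integrable (fun x => negMulLog (h x)) μ := by
    refine (hint.integrable_of_ae_notMem_eq_zero hvanish).neg.congr (ae_of_all _ fun x => ?_)
    simp [negMulLog]
  have hdensity : (fun x => negMulLog ((P.restrict S).rnDeriv μ x).toReal) =ᵐ[μ]
      fun x => negMulLog ((P S).toReal * h x) := by
    filter_upwards [rnDeriv_restrict_ae_eq_smul_rnDeriv_cond P S, hh] with x hx hhx
    simp [hx, hhx]
  refine ⟨(hh_int.negMulLog_const_mul hhl _).congr hdensity.symm, ?_⟩
  rw [integral_congr_ae hdensity, integral_negMulLog_const_mul hh_int hhl, hmass, mul_one,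
    setIntegral_eq_integral_of_ae_compl_eq_zero hvanish, ← integral_neg]
  simp only [negMulLog, neg_mul]

end Cond

theorem rectified_entropy_decomposition_general
    {Ω : Type*} [MeasureSpace Ω] [IsProbabilityMeasure (ℙ : Measure Ω)]
    (X : Ω → ℝ) (hmeas : Measurable X)
    (PX : Measure ℝ) (hPX : PX = Measure.map X ℙ)
    (hac : PX ≪ volume)
    (d : ℝ) (hd : d = (PX (Set.Ioi 0)).toReal) (hd0 : 0 < d)
    (Pcond : Measure ℝ)
    (hPcond : Pcond = (PX (Set.Ioi 0))⁻¹ • PX.restrict (Set.Ioi 0))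
    (h : ℝ → ℝ) (hh : ∀ x, h x = (Pcond.rnDeriv volume x).toReal)
    (H₁ : ℝ) (hH₁ : H₁ = -∫ x in Set.Ioi (0 : ℝ), h x * Real.log (h x))
    (hH₁int : IntegrableOn (fun x => h x * Real.log (h x)) (Set.Ioi 0) volume)
    (PZ : Measure ℝ) (hPZ : PZ = Measure.map (fun ω => max 0 (X ω)) ℙ)
    (ν : Measure ℝ) (hν : ν = Measure.dirac 0 + volume) :
    -∫ x, (PZ.rnDeriv ν x).toReal * Real.log ((PZ.rnDeriv ν x).toReal) ∂ν =
      d * H₁ + d * Real.log (1 / d) + (1 - d) * Real.log (1 / (1 - d)) := by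
  have : IsProbabilityMeasure PX := hPX ▸ Measure.isProbabilityMeasure_map hmeas.aemeasurable
  have hPS : PX (Set.Ioi 0) ≠ 0 := fun h0 => by simp [h0] at hd; linarith
  have hPZ_eq : PZ = PX (Set.Iic 0) • Measure.dirac 0 + PX.restrict (Set.Ioi 0) := by
    rw [hPZ, ← map_max_zero_eq, hPX, Measure.map_map (g := max 0) (by fun_prop) hmeas]
    rfl
  have hatom : (PX (Set.Iic 0)).toReal = 1 - d := by
    rw [hd, ← Set.compl_Ioi, ← measureReal_def, probReal_compl_eq_one_sub measurableSet_Ioi,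
      measureReal_def]
  -- `Pcond` is `PX[|Set.Ioi 0]` by definition.
  subst hPcond
  obtain ⟨hint, hcont⟩ :=
    integrable_and_integral_negMulLog_rnDeriv_restrict hac measurableSet_Ioi hPS (ae_of_all _ hh)
      hH₁int
  rw [hPZ_eq, hν, neg_integral_mul_log_rnDeriv_smul_dirac_add 0
    (Measure.absolutelyContinuous_restrict.trans hac) _ hint, hcont, ← hd, ← hH₁, hatom]
  simp only [negMulLog, one_div, Real.log_inv]
  ring

/-- **Entropy decomposition of a rectified random variable.**
Let `X` have law `ℙ_X ≪ λ`, `Z = max(0, X)`, `d = ℙ_X((0,∞)) ∈ (0,1)`, and let `h` be the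
density of `ℙ_{X|(0,∞)}` with finite differential entropy `H₁ = −∫_{(0,∞)} h log h dλ`.
Then the entropy of `Z` w.r.t. `ν = δ₀ + λ` satisfies
`−∫ (dℙ_Z/dν) log(dℙ_Z/dν) dν = d·H₁ + d log(1/d) + (1−d) log(1/(1−d))`. -/
theorem rectified_entropy_decomposition
    {Ω : Type*} [MeasureSpace Ω] [IsProbabilityMeasure (ℙ : Measure Ω)]
    (X : Ω → ℝ) (hmeas : Measurable X)
    (PX : Measure ℝ) (hPX : PX = Measure.map X ℙ)
    (hac : PX ≪ volume)
    (d : ℝ) (hd : d = (PX (Set.Ioi 0)).toReal) (hd0 : 0 < d) (hd1 : d < 1)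
    (Pcond : Measure ℝ)
    (hPcond : Pcond = (PX (Set.Ioi 0))⁻¹ • PX.restrict (Set.Ioi 0))
    (h : ℝ → ℝ) (hh : ∀ x, h x = (Pcond.rnDeriv volume x).toReal)
    (H₁ : ℝ) (hH₁ : H₁ = -∫ x in Set.Ioi (0 : ℝ), h x * Real.log (h x))
    (hH₁int : IntegrableOn (fun x => h x * Real.log (h x)) (Set.Ioi 0) volume)
    (PZ : Measure ℝ) (hPZ : PZ = Measure.map (fun ω => max 0 (X ω)) ℙ)
    (ν : Measure ℝ) (hν : ν = Measure.dirac 0 + volume) :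
    -∫ x, (PZ.rnDeriv ν x).toReal * Real.log ((PZ.rnDeriv ν x).toReal) ∂ν =
      d * H₁ + d * Real.log (1 / d) + (1 - d) * Real.log (1 / (1 - d)) :=
  rectified_entropy_decomposition_general X hmeas PX hPX hac d hd hd0 Pcond hPcond h hh H₁ hH₁
    hH₁int PZ hPZ ν hν
end

section
/- Let p > 0, μ ∈ ℝ, σ > 0. Let S be uniformly distributed on {−1, +1}, let G be Gamma-distributed with shape 1/p and rate 1, and let S and G be independent. Then the random variable X := μ + σ · S · (pG)^{1/p} has law absolutely continuous with respect to Lebesgue measure with density equal to the Generalized Gaussian density f_{p,μ,σ}(x) = (p^{1−1/p}/(2σΓ(1/p))) · exp(−|x−μ|^p/(p σ^p)). -/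
/-!
By independence, the law of `X` is the average of the laws of `X_ε = μ + σ ε (pG)^{1/p}`,
`ε = ±1`. Each `X_ε` is a strictly monotone smooth function of `G`, with inverse
`g = |x - μ|^p / (p σ^p)` on the half-line `ε (x - μ) > 0`, and its Jacobian `σ (pg)^{1/p - 1}`
turns the Gamma density `g^{1/p - 1} e^{-g} / Γ(1/p)` into `2 f_{p,μ,σ}` on that half-line.
Averaging the two branches gives `f_{p,μ,σ}` off the null set `{μ}`.
-/

open MeasureTheory ProbabilityTheory Real

open Set
open scoped ENNReal

lemma map_withDensity_eq_restrict_image_withDensity {s : Set ℝ} {φ φ' : ℝ → ℝ}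
    {f g : ℝ → ℝ≥0∞} (hs : MeasurableSet s) (hφ : Measurable φ)
    (hφ' : ∀ x ∈ s, HasDerivWithinAt φ (φ' x) s x) (hinj : InjOn φ s)
    (hf_compl : ∀ᵐ x, x ∉ s → f x = 0) (hfg : ∀ x ∈ s, f x = ENNReal.ofReal |φ' x| * g (φ x)) :
    (volume.withDensity f).map φ = (volume.restrict (φ '' s)).withDensity g := by
  have hf : f =ᵐ[volume] s.indicator f := hf_compl.mono fun x hx => by
    by_cases hxs : x ∈ s <;> simp [hxs, hx]
  ext t ht
  have hst : MeasurableSet (s ∩ φ ⁻¹' t) := hs.inter (hφ ht)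
  rw [Measure.map_apply hφ ht, withDensity_apply _ (hφ ht), withDensity_apply _ ht,
    Measure.restrict_restrict ht, inter_comm, ← image_inter_preimage,
    lintegral_image_eq_lintegral_abs_deriv_mul hst (fun x hx => (hφ' x hx.1).mono inter_subset_left)
      (hinj.mono inter_subset_left), lintegral_congr_ae (ae_restrict_of_ae hf),
    setLIntegral_indicator hs]
  exact setLIntegral_congr_fun hst fun x hx => hfg x hx.1

section

variable {p μ σ ε : ℝ}

lemma hasDerivAt_mul_rpow_one_div (hp : 0 < p) {g : ℝ} (hg : 0 < g) :
    HasDerivAt (fun g => (p * g) ^ (1 / p)) ((p * g) ^ (1 / p - 1)) g := by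
  have h := ((hasDerivAt_id' g).const_mul p).rpow_const (p := 1 / p) (Or.inl (by positivity))
  convert h using 1
  field_simp

lemma strictMonoOn_mul_rpow_one_div (hp : 0 < p) :
    StrictMonoOn (fun g => (p * g) ^ (1 / p)) (Ici 0) := fun a ha b hb hab =>
  strictMonoOn_rpow_Ici_of_exponent_pos (by positivity) (mul_nonneg hp.le ha)
    (mul_nonneg hp.le hb) (mul_lt_mul_of_pos_left hab hp)

lemma ggPdf_of_abs_sub_eq (hp : 0 < p) (hσ : 0 < σ) {x g : ℝ} (hg : 0 ≤ g)
    (hx : |x - μ| = σ * (p * g) ^ (1 / p)) :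
    ggPdf p μ σ x = p ^ (1 - 1 / p) / (2 * σ * Gamma (1 / p)) * exp (-g) := by
  have hpow : |x - μ| ^ p = σ ^ p * (p * g) := by
    rw [hx, mul_rpow hσ.le (by positivity), ← rpow_mul (by positivity), one_div_mul_cancel hp.ne',
      rpow_one]
  have hσp : 0 < σ ^ p := rpow_pos_of_pos hσ p
  rw [ggPdf, hpow]
  congr 2
  field_simp

lemma gammaPDFReal_eq_abs_deriv_mul_ggPdf (hp : 0 < p) (hσ : 0 < σ) (hε : |ε| = 1) {g : ℝ}
    (hg : 0 < g) :
    gammaPDFReal (1 / p) 1 g =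
      |σ * ε * (p * g) ^ (1 / p - 1)| * (2 * ggPdf p μ σ (μ + σ * ε * (p * g) ^ (1 / p))) := by
  have hΓ : 0 < Gamma (1 / p) := Gamma_pos_of_pos (by positivity)
  have hx : |μ + σ * ε * (p * g) ^ (1 / p) - μ| = σ * (p * g) ^ (1 / p) := by
    rw [add_sub_cancel_left, abs_mul, abs_mul, hε, mul_one, abs_of_pos hσ,
      abs_of_nonneg (by positivity)]
  have hp_pow : p ^ (1 / p - 1) * p ^ (1 - 1 / p) = 1 := by
    rw [← rpow_add hp]; norm_num
  rw [ggPdf_of_abs_sub_eq hp hσ hg.le hx, abs_mul, abs_mul, hε, mul_one, abs_of_pos hσ,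
    abs_of_pos (by positivity), mul_rpow hp.le hg.le, gammaPDFReal, if_pos hg.le, one_rpow, one_mul]
  calc 1 / Gamma (1 / p) * g ^ (1 / p - 1) * exp (-g)
      = p ^ (1 / p - 1) * p ^ (1 - 1 / p) / Gamma (1 / p) * g ^ (1 / p - 1) * exp (-g) := by
        rw [hp_pow]
    _ = _ := by field_simp

lemma image_Ioi_mul_rpow_one_div (hp : 0 < p) (hσ : 0 < σ) (hε : |ε| = 1) :
    (fun g => μ + σ * ε * (p * g) ^ (1 / p)) '' Ioi 0 = {x | 0 < ε * (x - μ)} := by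
  have hεε : ε * ε = 1 := by rw [← abs_mul_self, abs_mul, hε, one_mul]
  ext x
  constructor
  · rintro ⟨g, hg, rfl⟩
    have hr : 0 < (p * g) ^ (1 / p) := rpow_pos_of_pos (mul_pos hp hg) _
    have h : ε * (μ + σ * ε * (p * g) ^ (1 / p) - μ) = σ * (p * g) ^ (1 / p) := by
      linear_combination σ * (p * g) ^ (1 / p) * hεε
    show 0 < ε * (μ + σ * ε * (p * g) ^ (1 / p) - μ)
    exact h ▸ mul_pos hσ hr
  · intro hx
    have hu : 0 < ε * (x - μ) / σ := div_pos hx hσ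
    refine ⟨(ε * (x - μ) / σ) ^ p / p, mem_Ioi.mpr (by positivity), ?_⟩
    show μ + σ * ε * (p * ((ε * (x - μ) / σ) ^ p / p)) ^ (1 / p) = x
    rw [mul_div_cancel₀ _ hp.ne', ← rpow_mul hu.le, mul_one_div_cancel hp.ne', rpow_one]
    field_simp
    linear_combination (x - μ) * hεε

lemma map_gammaMeasure_mul_rpow_one_div (hp : 0 < p) (hσ : 0 < σ) (hε : |ε| = 1) :
    (gammaMeasure (1 / p) 1).map (fun g => μ + σ * ε * (p * g) ^ (1 / p)) =
      (2 : ℝ≥0∞) • (volume.restrict {x | 0 < ε * (x - μ)}).withDensity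
        fun x => ENNReal.ofReal (ggPdf p μ σ x) := by
  have hσε : σ * ε ≠ 0 := mul_ne_zero hσ.ne' (by rintro rfl; simp at hε)
  have hinj : InjOn (fun g => μ + σ * ε * (p * g) ^ (1 / p)) (Ioi 0) := fun a ha b hb hab =>
    (strictMonoOn_mul_rpow_one_div hp).injOn (Ioi_subset_Ici_self ha) (Ioi_subset_Ici_self hb)
      (mul_left_cancel₀ hσε (add_left_cancel hab))
  have hderiv (g : ℝ) (hg : g ∈ Ioi 0) :=
    (((hasDerivAt_mul_rpow_one_div hp hg).const_mul (σ * ε)).const_add μ).hasDerivWithinAt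
      (s := Ioi 0)
  -- only a.e.: for `p = 1` the Gamma density is `1` at `0`
  have hvanish : ∀ᵐ g, g ∉ Ioi 0 → gammaPDF (1 / p) 1 g = 0 := by
    filter_upwards [Measure.ae_ne volume 0] with g hg hg'
    exact gammaPDF_of_neg (lt_of_le_of_ne (not_lt.mp hg') hg)
  rw [gammaMeasure, map_withDensity_eq_restrict_image_withDensity measurableSet_Ioi (by fun_prop)
    hderiv hinj hvanish (g := fun x => 2 * ENNReal.ofReal (ggPdf p μ σ x)),
    image_Ioi_mul_rpow_one_div hp hσ hε]
  · exact withDensity_smul' 2 _ ENNReal.ofNat_ne_top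
  · intro g hg
    rw [gammaPDF, gammaPDFReal_eq_abs_deriv_mul_ggPdf hp hσ hε hg, ENNReal.ofReal_mul (abs_nonneg _),
      ENNReal.ofReal_mul zero_le_two, ENNReal.ofReal_ofNat]

end

lemma restrict_Iio_add_restrict_Ioi (μ : Measure ℝ) [NullSingletonClass μ] (a : ℝ) :
    μ.restrict (Iio a) + μ.restrict (Ioi a) = μ := by
  rw [Measure.restrict_congr_set Iio_ae_eq_Iic, ← compl_Ioi, add_comm,
    Measure.restrict_add_restrict_compl measurableSet_Ioi]

lemma map_eq_of_indepFun_of_map_eq_two_point {Ω α β γ : Type*} [MeasurableSpace Ω]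
    [MeasurableSpace α] [MeasurableSpace β] [MeasurableSpace γ] {P : Measure Ω} [IsFiniteMeasure P]
    {S : Ω → α} {G : Ω → β} {F : α × β → γ} (hF : Measurable F) (hS : Measurable S)
    (hG : Measurable G) {a b : α} {c d : ℝ≥0∞}
    (hSlaw : P.map S = c • Measure.dirac a + d • Measure.dirac b) (hindep : IndepFun S G P) :
    P.map (fun ω => F (S ω, G ω)) =
      c • (P.map G).map (fun y => F (a, y)) + d • (P.map G).map (fun y => F (b, y)) := by
  have hSG : P.map (fun ω => (S ω, G ω)) = (P.map S).prod (P.map G) :=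
    (indepFun_iff_map_prod_eq_prod_map_map hS.aemeasurable hG.aemeasurable).mp hindep
  change P.map (F ∘ fun ω => (S ω, G ω)) = _
  rw [← Measure.map_map hF (hS.prodMk hG), hSG, hSlaw, Measure.add_prod, Measure.prod_smul_left,
    Measure.prod_smul_left, Measure.dirac_prod, Measure.dirac_prod, Measure.map_add _ _ hF,
    Measure.map_smul, Measure.map_smul, Measure.map_map hF measurable_prodMk_left,
    Measure.map_map hF measurable_prodMk_left]
  rfl

/-- **Simulation of Generalized Gaussian random variables.**
If `S` is uniform on `{−1,+1}`, `G ∼ Gamma(1/p, 1)` and `S ⟂ G`, then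
`X = μ + σ·S·(pG)^{1/p}` has law with Lebesgue density `f_{p,μ,σ}`. -/
theorem genGaussian_simulation
    (p μ σ : ℝ) (hp : 0 < p) (hσ : 0 < σ)
    {Ω : Type*} [MeasureSpace Ω] [IsProbabilityMeasure (ℙ : Measure Ω)]
    (S G : Ω → ℝ) (hSmeas : Measurable S) (hGmeas : Measurable G)
    (hSlaw : Measure.map S ℙ =
      (1 / 2 : ENNReal) • Measure.dirac (-1 : ℝ) + (1 / 2 : ENNReal) • Measure.dirac (1 : ℝ))
    (hGlaw : Measure.map G ℙ = gammaMeasure (1 / p) 1)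
    (hindep : IndepFun S G ℙ) :
    Measure.map (fun ω => μ + σ * S ω * (p * G ω) ^ (1 / p)) ℙ =
      volume.withDensity (fun x => ENNReal.ofReal (ggPdf p μ σ x)) := by
  have hF : Measurable fun q : ℝ × ℝ => μ + σ * q.1 * (p * q.2) ^ (1 / p) := by fun_prop
  have hneg : {x : ℝ | 0 < -1 * (x - μ)} = Iio μ := by ext x; simp
  have hpos : {x : ℝ | 0 < 1 * (x - μ)} = Ioi μ := by ext x; simp
  have hhalf : (1 / 2 : ℝ≥0∞) * 2 = 1 := ENNReal.div_mul_cancel two_ne_zero ENNReal.ofNat_ne_top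
  rw [map_eq_of_indepFun_of_map_eq_two_point hF hSmeas hGmeas hSlaw hindep, hGlaw,
    map_gammaMeasure_mul_rpow_one_div hp hσ (by norm_num : |(-1 : ℝ)| = 1),
    map_gammaMeasure_mul_rpow_one_div hp hσ abs_one, hneg, hpos, smul_smul, smul_smul, hhalf,
    one_smul, one_smul, ← withDensity_add_measure, restrict_Iio_add_restrict_Ioi]
end
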